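/- Main theorem (bound on minimum of a positive Collatz cycle): if a_min is the minimum element of a cycle of the shortcut Collatz map f consisting of positive odd integers and having length k ≥ 2, then a_min < k(3^k + 1)/4, and in particular a_min < k·3^{k−1}. -/

import Mathlib

/-- Shortcut Collatz map on odd integers: f(a) = (3a+1)/2^(v2(3a+1)). -/
def collatzOdd (a : ℤ) : ℤ := (3 * a + 1) / 2 ^ ((3 * a + 1).natAbs.factorization 2)

/-- n (a) i = v2(3 * f^[i](a) + 1), i.e. the exponent n_{i+1} in the paper. -/
def collatzExp (a : ℤ) (i : ℕ) : ℕ :=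
  (3 * collatzOdd^[i] a + 1).natAbs.factorization 2

/-!
Write `a_i` for the cycle and `N = ∑ n_i` for the total number of halvings. Multiplying
`2 ^ n_i * a_{i+1} = 3 * a_i + 1` around the cycle gives `2 ^ N = ∏ (3 + 1 / a_i)`, so
`3 ^ k < 2 ^ N ≤ (3 + 1 / a_min) ^ k`. Since `8 ∣ 2 ^ N` while `3 ^ k ≡ 1, 3 (mod 8)`, the gap
`2 ^ N - 3 ^ k` is at least `5`; with `e = 1 / (3 a_min)` this reads
`1 + 5 / 3 ^ k ≤ (1 + e) ^ k`, and the Bernoulli-type estimate `(1 + e) ^ k * (1 - k e) ≤ 1`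
turns it into the bound on `a_min`.
-/

open Finset

theorem two_pow_mul_collatzOdd (a : ℤ) :
    2 ^ (3 * a + 1).natAbs.factorization 2 * collatzOdd a = 3 * a + 1 :=
  Int.mul_ediv_cancel' <| by exact_mod_cast Int.natCast_dvd.mpr (Nat.ordProj_dvd _ 2)

theorem collatzOdd_pos {a : ℤ} (ha : 0 ≤ a) : 0 < collatzOdd a :=
  pos_of_mul_pos_right (by rw [two_pow_mul_collatzOdd]; omega) (by positivity)

theorem iterate_collatzOdd_pos {a : ℤ} (ha : 0 < a) (i : ℕ) : 0 < collatzOdd^[i] a := by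
  induction i with
  | zero => exact ha
  | succ i ih =>
    rw [Function.iterate_succ_apply']
    exact collatzOdd_pos ih.le

theorem two_pow_collatzExp_mul_iterate_succ (a : ℤ) (i : ℕ) :
    2 ^ collatzExp a i * collatzOdd^[i + 1] a = 3 * collatzOdd^[i] a + 1 := by
  rw [Function.iterate_succ_apply']
  exact two_pow_mul_collatzOdd _

theorem Finset.prod_range_succ_eq_of_periodic {M : Type*} [CommMonoid M] (f : ℕ → M) {k : ℕ}
    (hf : f k = f 0) : ∏ i ∈ range k, f (i + 1) = ∏ i ∈ range k, f i := by
  cases k with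
  | zero => rfl
  | succ k => rw [prod_range_succ, prod_range_succ', hf]

section OrderedField

variable {K : Type*} [Field K] [LinearOrder K] [IsStrictOrderedRing K]

theorem two_pow_sum_eq_prod_three_add_inv {x : ℕ → K} {n : ℕ → ℕ} {k : ℕ}
    (hx : ∀ i, x i ≠ 0) (hrec : ∀ i, 2 ^ n i * x (i + 1) = 3 * x i + 1) (hcyc : x k = x 0) :
    (2 : K) ^ (∑ i ∈ range k, n i) = ∏ i ∈ range k, (3 + (x i)⁻¹) := by
  have hmul :
      2 ^ (∑ i ∈ range k, n i) * ∏ i ∈ range k, x i = ∏ i ∈ range k, (3 * x i + 1) := by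
    rw [← prod_range_succ_eq_of_periodic x hcyc, ← prod_pow_eq_pow_sum, ← prod_mul_distrib]
    exact prod_congr rfl fun i _ => hrec i
  have hfactor : ∀ i, 3 + (x i)⁻¹ = (3 * x i + 1) / x i := fun i => by field_simp [hx i]
  simp only [hfactor, prod_div_distrib]
  rw [← hmul, mul_div_cancel_right₀ _ (prod_ne_zero_iff.mpr fun i _ => hx i)]

theorem three_pow_lt_prod_three_add_inv {x : ℕ → K} {k : ℕ} (hk : k ≠ 0)
    (hx : ∀ i, 0 < x i) :
    3 ^ k < ∏ i ∈ range k, (3 + (x i)⁻¹) := by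
  simpa using prod_lt_prod_of_nonempty (f := fun _ => (3 : K)) (by norm_num)
    (fun i _ => lt_add_of_pos_right 3 (inv_pos.mpr (hx i))) (nonempty_range_iff.mpr hk)

theorem prod_three_add_inv_le_of_le {x : ℕ → K} {k : ℕ} (hx : 0 < x 0)
    (hmin : ∀ i < k, x 0 ≤ x i) :
    ∏ i ∈ range k, (3 + (x i)⁻¹) ≤ (3 + (x 0)⁻¹) ^ k := by
  simpa using prod_le_prod (s := range k) (g := fun _ => 3 + (x 0)⁻¹)
    (fun i hi => by have := hx.trans_le (hmin i (mem_range.mp hi)); positivity)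
    (fun i hi => add_le_add_right (inv_anti₀ hx (hmin i (mem_range.mp hi))) 3)

theorem one_add_pow_mul_one_sub_mul_le {e : K} (he : 0 ≤ e) (k : ℕ) :
    (1 + e) ^ k * (1 - k * e) ≤ 1 := by
  induction k with
  | zero => simp
  | succ k ih =>
    have hstep : (1 + e) * (1 - (k + 1) * e) ≤ 1 - k * e := by
      nlinarith [mul_nonneg (Nat.cast_nonneg (α := K) k) (sq_nonneg e), sq_nonneg e]
    calc (1 + e) ^ (k + 1) * (1 - ((k + 1 : ℕ) : K) * e)
        = (1 + e) ^ k * ((1 + e) * (1 - (k + 1) * e)) := by push_cast; ring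
      _ ≤ (1 + e) ^ k * (1 - k * e) := by gcongr
      _ ≤ 1 := ih

theorem lt_mul_three_pow_add_one_div_four {a : K} (ha : 0 < a) (k : ℕ)
    (h : 3 ^ k + 5 ≤ (3 + a⁻¹) ^ k) : a < k * (3 ^ k + 1) / 4 := by
  by_contra! hle
  have hfactor : 3 + a⁻¹ = 3 * (1 + (3 * a)⁻¹) := by field_simp
  set P : K := 3 ^ k
  set e : K := (3 * a)⁻¹
  have hP : 1 ≤ P := one_le_pow₀ (by norm_num)
  have he : 0 ≤ e := by positivity
  -- `k * (P + 1) ≤ 4 a` means `k e ≤ 4 / (3 (P + 1))`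
  have hke : 3 * (P + 1) * (k * e) ≤ 4 := by
    calc 3 * (P + 1) * (k * e) = k * (P + 1) / 4 * (4 * (3 * a)⁻¹ * 3) := by ring
      _ ≤ a * (4 * (3 * a)⁻¹ * 3) := by gcongr
      _ = 4 := by field_simp
  have hpow : (3 + a⁻¹) ^ k = P * (1 + e) ^ k := by rw [hfactor, mul_pow]
  have hbern := one_add_pow_mul_one_sub_mul_le he k
  have hgap : (P + 5) * (1 - k * e) ≤ P := by
    have : 0 ≤ 1 - k * e := by nlinarith
    calc (P + 5) * (1 - k * e) ≤ P * (1 + e) ^ k * (1 - k * e) := by rw [← hpow]; gcongr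
      _ = P * ((1 + e) ^ k * (1 - k * e)) := by ring
      _ ≤ P := mul_le_of_le_one_right (by positivity) hbern
  nlinarith

end OrderedField

theorem three_pow_mod_eight (k : ℕ) : 3 ^ k % 8 = 1 ∨ 3 ^ k % 8 = 3 := by
  induction k with
  | zero => left; rfl
  | succ k ih => rw [pow_succ, Nat.mul_mod]; rcases ih with h | h <;> simp [h]

theorem three_pow_add_five_le_two_pow {k N : ℕ} (hk : 2 ≤ k) (h : 3 ^ k < 2 ^ N) :
    3 ^ k + 5 ≤ 2 ^ N := by
  have hN : 3 < N := by
    refine (Nat.pow_lt_pow_iff_right (a := 2) (by norm_num)).mp ?_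
    calc 2 ^ 3 < 3 ^ 2 := by norm_num
      _ ≤ 3 ^ k := Nat.pow_le_pow_right (by norm_num) hk
      _ < 2 ^ N := h
  -- `2 ^ N - 3 ^ k` is positive and `≡ 5` or `7 (mod 8)`
  have h8 : 8 ∣ 2 ^ N := (pow_dvd_pow 2 hN.le : 2 ^ 3 ∣ 2 ^ N)
  have := three_pow_mod_eight k
  omega

theorem cast_mul_three_pow_add_one_div_four_le {k : ℕ} (hk : 1 ≤ k) :
    (k * (3 ^ k + 1) / 4 : ℚ) ≤ k * 3 ^ (k - 1) := by
  obtain ⟨m, rfl⟩ := Nat.exists_eq_add_of_le' hk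
  have : (1 : ℚ) ≤ 3 ^ m := one_le_pow₀ (by norm_num)
  rw [Nat.add_sub_cancel, div_le_iff₀ (by norm_num), pow_succ]
  push_cast
  nlinarith

theorem collatzOdd_min_bound_general (a : ℤ) (hpos : 0 < a) (k : ℕ) (hk : 2 ≤ k)
    (hcyc : collatzOdd^[k] a = a)
    (hmin : ∀ i : ℕ, i < k → a ≤ collatzOdd^[i] a) :
    (a : ℚ) < k * (3 ^ k + 1) / 4 ∧ (a : ℚ) < k * 3 ^ (k - 1) := by
  set x : ℕ → ℚ := fun i => (collatzOdd^[i] a : ℚ)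
  set N := ∑ i ∈ range k, collatzExp a i
  have hx : ∀ i, 0 < x i := fun i => by
    simp only [x]; exact_mod_cast iterate_collatzOdd_pos hpos i
  have hprod : (2 : ℚ) ^ N = ∏ i ∈ range k, (3 + (x i)⁻¹) :=
    two_pow_sum_eq_prod_three_add_inv (fun i => (hx i).ne')
      (fun i => by simp only [x]; exact_mod_cast two_pow_collatzExp_mul_iterate_succ a i)
      (by simp [x, hcyc])
  have hlower : 3 ^ k < 2 ^ N := by
    exact_mod_cast hprod ▸ three_pow_lt_prod_three_add_inv (by omega) hx
  have hupper : (2 : ℚ) ^ N ≤ (3 + (a : ℚ)⁻¹) ^ k :=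
    hprod ▸ prod_three_add_inv_le_of_le (hx 0) fun i hi => by
      simp only [x]; exact_mod_cast hmin i hi
  have hgap : (3 : ℚ) ^ k + 5 ≤ 2 ^ N := by
    exact_mod_cast three_pow_add_five_le_two_pow hk hlower
  have hbound := lt_mul_three_pow_add_one_div_four (by exact_mod_cast hpos) k (hgap.trans hupper)
  exact ⟨hbound, hbound.trans_le (cast_mul_three_pow_add_one_div_four_le (by omega))⟩

theorem collatzOdd_min_bound (a : ℤ) (ha : Odd a) (hpos : 0 < a) (k : ℕ) (hk : 2 ≤ k)
    (hcyc : collatzOdd^[k] a = a)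
    (hmin_period : ∀ i : ℕ, 0 < i → i < k → collatzOdd^[i] a ≠ a)
    (hmin : ∀ i : ℕ, i < k → a ≤ collatzOdd^[i] a) :
    (a : ℚ) < k * (3 ^ k + 1) / 4 ∧ (a : ℚ) < k * 3 ^ (k - 1) :=
  collatzOdd_min_bound_general a hpos k hk hcyc hmin
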